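/- Assume in addition that σ_n = T almost surely for every n ∈ ℕ, and that for some p ≥ 1 one has sup_{n ∈ ℕ} 𝔼[ sup_{t ∈ [0,T]} ‖X_n(t)‖^p ] < ∞. Then σ_∞ = T almost surely. -/

import Mathlib

/-!
On `{σ_∞ < T}` the path of `X_∞` blows up, so before `σ_∞` it exits the ball of radius `r`, and
then so does the localized process `X_∞^{(r)}`, which agrees with `X_∞` up to the exit time.
Since `σ_n = T` almost surely, `X_n^{(r)}` agrees with `X_n` on all of `[0, T]` as long as `X_n`
stays in that ball; so `sup ‖X_∞^{(r)}‖ ≥ r` forces `sup ‖X_n^{(r)} - X_∞^{(r)}‖ ≥ r/2` or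
`sup ‖X_n‖ ≥ r/2`. The first event has vanishing probability as `n → ∞`, and the second has
probability at most `C / (r/2)^p` by Markov's inequality. Hence `ℙ(σ_∞ < T) ≤ C / (r/2)^p` for
every `r > 0`, and `r → ∞` gives the claim.
-/

open MeasureTheory Filter Set Topology

section Paths

variable {E : Type*} [NormedAddCommGroup E]

/-- `ρ^{(r)}` of the paper, for a path `f` with lifetime `σ`, with the convention `inf ∅ = T`. -/
noncomputable def exitTime (f : ℝ → E) (σ T r : ℝ) : ℝ :=
  sInf ({t : ℝ | t ∈ Ioo 0 σ ∧ r < ‖f t‖} ∪ {T})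

lemma exitTime_eq_of_norm_le {f : ℝ → E} {σ T r : ℝ} (h : ∀ t ∈ Ioo 0 σ, ‖f t‖ ≤ r) :
    exitTime f σ T r = T := by
  have hS : {t : ℝ | t ∈ Ioo 0 σ ∧ r < ‖f t‖} = ∅ :=
    eq_empty_iff_forall_notMem.2 fun t ⟨ht, hr⟩ => (h t ht).not_gt hr
  rw [exitTime, hS, empty_union, csInf_singleton]

lemma exitTime_mem_Ico_and_le_norm {f : ℝ → E} {σ T r : ℝ} (hσT : σ ≤ T)
    (hf : ContinuousOn f (Ico 0 σ)) (hexit : ∃ t ∈ Ioo 0 σ, r < ‖f t‖) :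
    exitTime f σ T r ∈ Ico 0 σ ∧ r ≤ ‖f (exitTime f σ T r)‖ := by
  obtain ⟨t₀, ht₀, hrt₀⟩ := hexit
  set S := {t : ℝ | t ∈ Ioo 0 σ ∧ r < ‖f t‖}
  have hSne : S.Nonempty := ⟨t₀, ht₀, hrt₀⟩
  have hSbdd : BddBelow S := ⟨0, fun t ht => ht.1.1.le⟩
  have hτt₀ : sInf S ≤ t₀ := csInf_le hSbdd ⟨ht₀, hrt₀⟩
  have hτ : exitTime f σ T r = sInf S := by
    rw [exitTime, csInf_union hSbdd hSne bddBelow_singleton (singleton_nonempty T),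
      csInf_singleton, min_eq_left (by linarith [ht₀.2])]
  have hτmem : sInf S ∈ Ico 0 σ :=
    ⟨le_csInf hSne fun t ht => ht.1.1.le, hτt₀.trans_lt ht₀.2⟩
  have hS : S ⊆ Ico 0 σ := fun t ht => Ioo_subset_Ico_self ht.1
  refine hτ ▸ ⟨hτmem, ?_⟩
  exact ContinuousWithinAt.closure_le (csInf_mem_closure hSne hSbdd) continuousWithinAt_const
    ((hf _ hτmem).mono hS).norm fun t ht => ht.2.le

lemma bddAbove_range_norm_Icc {f : ℝ → E} {a b : ℝ} (hf : ContinuousOn f (Icc a b)) :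
    BddAbove (range fun t : Icc a b => ‖f t‖) :=
  (isCompact_range hf.domRestrict.norm).bddAbove

lemma le_iSup_norm_of_eqOn_exitTime {f g : ℝ → E} {σ T r : ℝ} (hσ : σ ∈ Ioc 0 T)
    (hf : ContinuousOn f (Ico 0 σ)) (hblow : ∃ᶠ t in 𝓝[<] σ, r < ‖f t‖) (hg : Continuous g)
    (hgf : ∀ t ∈ Icc 0 (exitTime f σ T r), g t = f t) :
    r ≤ ⨆ t : Icc 0 T, ‖g t‖ := by
  obtain ⟨t₀, hrt₀, ht₀⟩ := (hblow.and_eventually (Ioo_mem_nhdsLT hσ.1)).exists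
  obtain ⟨hτ, hrτ⟩ := exitTime_mem_Ico_and_le_norm hσ.2 hf ⟨t₀, ht₀, hrt₀⟩
  calc r ≤ ‖g (exitTime f σ T r)‖ := by rwa [hgf _ ⟨hτ.1, le_rfl⟩]
    _ ≤ ⨆ t : Icc 0 T, ‖g t‖ :=
      le_ciSup (f := fun t : Icc 0 T => ‖g t‖) (bddAbove_range_norm_Icc hg.continuousOn)
        ⟨_, hτ.1, hτ.2.le.trans hσ.2⟩

lemma iSup_norm_le_of_eqOn_exitTime {f g h : ℝ → E} {T r : ℝ} (hf : ContinuousOn f (Icc 0 T))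
    (hg : Continuous g) (hh : Continuous h) (hgf : ∀ t ∈ Icc 0 (exitTime f T T r), g t = f t)
    (hfr : ⨆ t : Icc 0 T, ‖f t‖ ≤ r) :
    ⨆ t : Icc 0 T, ‖h t‖ ≤ (⨆ t : Icc 0 T, ‖f t‖) + ⨆ t : Icc 0 T, ‖g t - h t‖ := by
  have hfsup := bddAbove_range_norm_Icc hf
  have hghsup : BddAbove (range fun t : Icc 0 T => ‖g t - h t‖) :=
    bddAbove_range_norm_Icc (f := fun t => g t - h t) (hg.sub hh).continuousOn
  have hτ : exitTime f T T r = T := exitTime_eq_of_norm_le fun t ht =>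
    (le_ciSup hfsup ⟨t, Ioo_subset_Icc_self ht⟩).trans hfr
  refine Real.iSup_le (fun t => ?_) (add_nonneg (Real.iSup_nonneg fun _ => norm_nonneg _)
    (Real.iSup_nonneg fun _ => norm_nonneg _))
  calc ‖h t‖ ≤ ‖g t‖ + ‖g t - h t‖ := norm_le_norm_add_norm_sub _ _
    _ = ‖f t‖ + ‖g t - h t‖ := by rw [hgf t (by rw [hτ]; exact t.2)]
    _ ≤ _ := add_le_add (le_ciSup hfsup t) (le_ciSup hghsup t)

lemma le_iSup_norm_sub_or_le_iSup_norm {f g f' g' : ℝ → E} {σ T R : ℝ} (hσ : σ ∈ Ioc 0 T)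
    (hf : ContinuousOn f (Icc 0 T)) (hg : Continuous g)
    (hgf : ∀ t ∈ Icc 0 (exitTime f T T (2 * R)), g t = f t)
    (hf' : ContinuousOn f' (Ico 0 σ)) (hblow : ∃ᶠ t in 𝓝[<] σ, 2 * R < ‖f' t‖)
    (hg' : Continuous g') (hgf' : ∀ t ∈ Icc 0 (exitTime f' σ T (2 * R)), g' t = f' t) :
    R ≤ ⨆ t : Icc 0 T, ‖g t - g' t‖ ∨ R ≤ ⨆ t : Icc 0 T, ‖f t‖ := by
  by_contra! hsmall
  have hf_nonneg : 0 ≤ ⨆ t : Icc 0 T, ‖f t‖ := Real.iSup_nonneg fun _ => norm_nonneg _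
  have hlow := le_iSup_norm_of_eqOn_exitTime hσ hf' hblow hg' hgf'
  have hup := iSup_norm_le_of_eqOn_exitTime hf hg hg' hgf (by linarith [hsmall.2])
  linarith [hsmall.1, hsmall.2]

end Paths

section Probability

variable {Ω E : Type*} [MeasurableSpace Ω] {μ : Measure Ω}

lemma aemeasurable_iSup_norm_Icc [NormedAddCommGroup E] [MeasurableSpace E]
    [OpensMeasurableSpace E] {X : ℝ → Ω → E} (hX : ∀ t, Measurable (X t)) {a b : ℝ}
    (hcont : ∀ᵐ ω ∂μ, ContinuousOn (fun t => X t ω) (Icc a b)) :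
    AEMeasurable (fun ω => ⨆ t : Icc a b, ‖X t ω‖) μ := by
  obtain ⟨D, hDcount, hDdense⟩ := TopologicalSpace.exists_countable_dense (Icc a b)
  have : Countable D := hDcount.to_subtype
  refine ⟨fun ω => ⨆ t : D, ‖X t ω‖, Measurable.iSup fun t => (hX t).norm, ?_⟩
  filter_upwards [hcont] with ω hω
  exact (hDdense.ciSup' (f := fun t : Icc a b => ‖X t ω‖) hω.domRestrict.norm).symm

lemma meas_ge_le_lintegral_ofReal_rpow_div {S : Ω → ℝ} (hS : AEMeasurable S μ) {p R : ℝ}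
    (hp : 0 ≤ p) (hR : 0 < R) :
    μ {ω | R ≤ S ω} ≤ (∫⁻ ω, ENNReal.ofReal (S ω ^ p) ∂μ) / ENNReal.ofReal (R ^ p) := by
  refine (measure_mono fun ω (hω : R ≤ S ω) =>
    ENNReal.ofReal_le_ofReal (Real.rpow_le_rpow hR.le hω hp)).trans ?_
  exact meas_ge_le_lintegral_div (hS.pow_const p).ennreal_ofReal
    (ENNReal.ofReal_pos.2 (Real.rpow_pos_of_pos hR p)).ne' ENNReal.ofReal_ne_top

end Probability

lemma ENNReal.eq_zero_of_forall_le_div_ofReal_rpow {m C : ENNReal} (hC : C ≠ ⊤) {p : ℝ}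
    (hp : 0 < p) (h : ∀ R > 0, m ≤ C / ENNReal.ofReal (R ^ p)) : m = 0 := by
  have hlim : Tendsto (fun R : ℝ => C / ENNReal.ofReal (R ^ p)) atTop (𝓝 0) := by
    simpa using ENNReal.Tendsto.const_div
      (ENNReal.tendsto_ofReal_atTop.comp (tendsto_rpow_atTop hp)) (Or.inr hC)
  exact le_zero_iff.1 (ge_of_tendsto hlim ((eventually_gt_atTop 0).mono h))

theorem stmt_8_general
    {Ω : Type*} [MeasurableSpace Ω] (P : Measure Ω)
    {E : Type*} [NormedAddCommGroup E]
    [MeasurableSpace E] [BorelSpace E]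
    (T : ℝ)
    -- the explosion times σ_n (n ∈ ℕ) and σ_∞
    (σ : ℕ → Ω → ℝ) (σi : Ω → ℝ)
    (hσimem : ∀ ω, σi ω ∈ Set.Ioc 0 T)
    -- the processes X_n (n ∈ ℕ) and X_∞, jointly measurable
    (X : ℕ → ℝ → Ω → E) (Xi : ℝ → Ω → E)
    (hXmeas : ∀ n, Measurable fun p : ℝ × Ω => X n p.1 p.2)
    -- path continuity on [0, σ_n(ω)), and on [0,T] if σ_n(ω) = T
    (hXcontT : ∀ n ω, σ n ω = T → ContinuousOn (fun t => X n t ω) (Set.Icc 0 T))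
    (hXicont : ∀ ω, ContinuousOn (fun t => Xi t ω) (Set.Ico 0 (σi ω)))
    -- σ_n is an explosion time: on {σ_n < T}, limsup_{t ↑ σ_n} ‖X_n(t)‖ = ∞
    (hexpli : ∀ ω, σi ω < T →
      ∀ M : ℝ, ∃ᶠ t in nhdsWithin (σi ω) (Set.Iio (σi ω)), M < ‖Xi t ω‖)
    -- the stopping times ρ_n^{(r)} = inf { t ∈ (0, σ_n) : ‖X_n(t)‖ > r }, inf ∅ := T
    (ρ : ℕ → ℝ → Ω → ℝ) (ρi : ℝ → Ω → ℝ)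
    (hρ : ∀ n r ω, ρ n r ω = sInf ({t : ℝ | t ∈ Set.Ioo 0 (σ n ω) ∧ r < ‖X n t ω‖} ∪ {T}))
    (hρi : ∀ r ω, ρi r ω = sInf ({t : ℝ | t ∈ Set.Ioo 0 (σi ω) ∧ r < ‖Xi t ω‖} ∪ {T}))
    -- the globally defined processes X_n^{(r)} (denoted Y n r) and X_∞^{(r)} (denoted Yi r)
    (Y : ℕ → ℝ → ℝ → Ω → E) (Yi : ℝ → ℝ → Ω → E)
    (hYcont : ∀ n r ω, Continuous fun t => Y n r t ω)
    (hYicont : ∀ r ω, Continuous fun t => Yi r t ω)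
    -- assumption (a)
    (ha : ∀ n r, 0 < r → ∀ᵐ ω ∂P, ∀ t ∈ Set.Icc 0 (ρ n r ω), Y n r t ω = X n t ω)
    (hai : ∀ r, 0 < r → ∀ᵐ ω ∂P, ∀ t ∈ Set.Icc 0 (ρi r ω), Yi r t ω = Xi t ω)
    -- assumption (b): X_n^{(r)} → X_∞^{(r)} in L⁰(Ω; C([0,T]; E))
    (hb : ∀ r, 0 < r → TendstoInMeasure P
      (fun n ω => ⨆ t : Set.Icc (0:ℝ) T, ‖Y n r (t : ℝ) ω - Yi r (t : ℝ) ω‖)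
      atTop (fun _ => (0 : ℝ)))
    -- additionally: σ_n = T almost surely for all n ∈ ℕ
    (hσT : ∀ n, ∀ᵐ ω ∂P, σ n ω = T)
    -- and sup_n 𝔼[ sup_t ‖X_n(t)‖^p ] < ∞ for some p ≥ 1
    (p : ℝ) (hp : 1 ≤ p) (C : ENNReal) (hC : C < ⊤)
    (hbdd : ∀ n : ℕ,
      ∫⁻ ω, ENNReal.ofReal ((⨆ t : Set.Icc (0:ℝ) T, ‖X n (t : ℝ) ω‖) ^ p) ∂P ≤ C) :
    ∀ᵐ ω ∂P, σi ω = T := by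
  have hp₀ : 0 < p := by linarith
  have hmarkov (n : ℕ) {R : ℝ} (hR : 0 < R) :
      P {ω | R ≤ ⨆ t : Icc (0:ℝ) T, ‖X n t ω‖} ≤ C / ENNReal.ofReal (R ^ p) :=
    (meas_ge_le_lintegral_ofReal_rpow_div (aemeasurable_iSup_norm_Icc
      (fun t => (hXmeas n).comp measurable_prodMk_left)
      ((hσT n).mono fun ω => hXcontT n ω)) hp₀.le hR).trans
      (ENNReal.div_le_div_right (hbdd n) _)
  have hsplit (n : ℕ) {R : ℝ} (hR : 0 < R) : P {ω | σi ω < T} ≤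
      P {ω | R ≤ dist (⨆ t : Icc (0:ℝ) T, ‖Y n (2 * R) t ω - Yi (2 * R) t ω‖) 0} +
        P {ω | R ≤ ⨆ t : Icc (0:ℝ) T, ‖X n t ω‖} := by
    have h2R : 0 < 2 * R := by linarith
    refine (measure_mono_ae ?_).trans (measure_union_le _ _)
    filter_upwards [hai _ h2R, ha n _ h2R, hσT n] with ω hYiXi hYX hσn hσi
    refine (le_iSup_norm_sub_or_le_iSup_norm (hσimem ω) (hXcontT n ω hσn) (hYcont n (2 * R) ω)
      (fun t ht => hYX t (by rwa [hρ, hσn])) (hXicont ω) (hexpli ω hσi _) (hYicont (2 * R) ω)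
      (fun t ht => hYiXi t (by rwa [hρi]))).imp_left fun h => ?_
    exact h.trans ((le_abs_self _).trans_eq (Real.dist_0_eq_abs _).symm)
  have hbound (R : ℝ) (hR : 0 < R) : P {ω | σi ω < T} ≤ C / ENNReal.ofReal (R ^ p) := by
    refine le_of_tendsto_of_tendsto' tendsto_const_nhds (by simpa only [zero_add] using
      (tendstoInMeasure_iff_dist.1 (hb (2 * R) (by linarith)) R hR).add_const _) fun n => ?_
    exact (hsplit n hR).trans (add_le_add le_rfl (hmarkov n hR))
  have hnull := ENNReal.eq_zero_of_forall_le_div_ofReal_rpow hC.ne hp₀ hbound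
  filter_upwards [measure_eq_zero_iff_ae_notMem.1 hnull] with ω hω
  exact (hσimem ω).2.antisymm (not_lt.1 hω)

theorem stmt_8
    {Ω : Type*} [MeasurableSpace Ω] (P : Measure Ω) [IsProbabilityMeasure P]
    {E : Type*} [NormedAddCommGroup E] [NormedSpace ℝ E] [CompleteSpace E]
    [MeasurableSpace E] [BorelSpace E]
    (T : ℝ) (hT : 0 < T)
    -- the explosion times σ_n (n ∈ ℕ) and σ_∞
    (σ : ℕ → Ω → ℝ) (σi : Ω → ℝ)
    (hσmeas : ∀ n, Measurable (σ n)) (hσimeas : Measurable σi)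
    (hσmem : ∀ n ω, σ n ω ∈ Set.Ioc 0 T) (hσimem : ∀ ω, σi ω ∈ Set.Ioc 0 T)
    -- the processes X_n (n ∈ ℕ) and X_∞, jointly measurable
    (X : ℕ → ℝ → Ω → E) (Xi : ℝ → Ω → E)
    (hXmeas : ∀ n, Measurable fun p : ℝ × Ω => X n p.1 p.2)
    (hXimeas : Measurable fun p : ℝ × Ω => Xi p.1 p.2)
    -- path continuity on [0, σ_n(ω)), and on [0,T] if σ_n(ω) = T
    (hXcont : ∀ n ω, ContinuousOn (fun t => X n t ω) (Set.Ico 0 (σ n ω)))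
    (hXcontT : ∀ n ω, σ n ω = T → ContinuousOn (fun t => X n t ω) (Set.Icc 0 T))
    (hXicont : ∀ ω, ContinuousOn (fun t => Xi t ω) (Set.Ico 0 (σi ω)))
    (hXicontT : ∀ ω, σi ω = T → ContinuousOn (fun t => Xi t ω) (Set.Icc 0 T))
    -- σ_n is an explosion time: on {σ_n < T}, limsup_{t ↑ σ_n} ‖X_n(t)‖ = ∞
    (hexpl : ∀ n ω, σ n ω < T →
      ∀ M : ℝ, ∃ᶠ t in nhdsWithin (σ n ω) (Set.Iio (σ n ω)), M < ‖X n t ω‖)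
    (hexpli : ∀ ω, σi ω < T →
      ∀ M : ℝ, ∃ᶠ t in nhdsWithin (σi ω) (Set.Iio (σi ω)), M < ‖Xi t ω‖)
    -- the stopping times ρ_n^{(r)} = inf { t ∈ (0, σ_n) : ‖X_n(t)‖ > r }, inf ∅ := T
    (ρ : ℕ → ℝ → Ω → ℝ) (ρi : ℝ → Ω → ℝ)
    (hρ : ∀ n r ω, ρ n r ω = sInf ({t : ℝ | t ∈ Set.Ioo 0 (σ n ω) ∧ r < ‖X n t ω‖} ∪ {T}))
    (hρi : ∀ r ω, ρi r ω = sInf ({t : ℝ | t ∈ Set.Ioo 0 (σi ω) ∧ r < ‖Xi t ω‖} ∪ {T}))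
    -- the globally defined processes X_n^{(r)} (denoted Y n r) and X_∞^{(r)} (denoted Yi r)
    (Y : ℕ → ℝ → ℝ → Ω → E) (Yi : ℝ → ℝ → Ω → E)
    (hYmeas : ∀ n r, Measurable fun p : ℝ × Ω => Y n r p.1 p.2)
    (hYimeas : ∀ r, Measurable fun p : ℝ × Ω => Yi r p.1 p.2)
    (hYcont : ∀ n r ω, Continuous fun t => Y n r t ω)
    (hYicont : ∀ r ω, Continuous fun t => Yi r t ω)
    -- assumption (a)
    (ha : ∀ n r, 0 < r → ∀ᵐ ω ∂P, ∀ t ∈ Set.Icc 0 (ρ n r ω), Y n r t ω = X n t ω)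
    (hai : ∀ r, 0 < r → ∀ᵐ ω ∂P, ∀ t ∈ Set.Icc 0 (ρi r ω), Yi r t ω = Xi t ω)
    -- assumption (b): X_n^{(r)} → X_∞^{(r)} in L⁰(Ω; C([0,T]; E))
    (hb : ∀ r, 0 < r → TendstoInMeasure P
      (fun n ω => ⨆ t : Set.Icc (0:ℝ) T, ‖Y n r (t : ℝ) ω - Yi r (t : ℝ) ω‖)
      atTop (fun _ => (0 : ℝ)))
    -- additionally: σ_n = T almost surely for all n ∈ ℕ
    (hσT : ∀ n, ∀ᵐ ω ∂P, σ n ω = T)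
    -- and sup_n 𝔼[ sup_t ‖X_n(t)‖^p ] < ∞ for some p ≥ 1
    (p : ℝ) (hp : 1 ≤ p) (C : ENNReal) (hC : C < ⊤)
    (hbdd : ∀ n : ℕ,
      ∫⁻ ω, ENNReal.ofReal ((⨆ t : Set.Icc (0:ℝ) T, ‖X n (t : ℝ) ω‖) ^ p) ∂P ≤ C) :
    ∀ᵐ ω ∂P, σi ω = T :=
  stmt_8_general P T σ σi hσimem X Xi hXmeas hXcontT hXicont hexpli ρ ρi hρ hρi Y Yi hYcont hYicont
    ha hai hb hσT p hp C hC hbdd
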